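/- Minimality theorem: let N be an NFA and N_min a state-minimal NFA equivalent to N. Let B and C be the RI-DFAs constructed by the subset construction (one singleton initial state per NFA state) from N and N_min respectively, and let B_min be obtained from B by the initial-state reduction via language-equivalence classes. Then the number of initial states of C is less than or equal to the number of initial states of B_min. -/
import Mathlib


/-- One-step determinized (subset) transition of an NFA: `δ^B(S,a) = ⋃_{q∈S} ρ(q,a)`.
    The empty set plays the role of "undefined". -/
def dTrans {Q σ : Type*} (ρ : Q → σ → Set Q) (S : Set Q) (a : σ) : Set Q :=
  ⋃ q ∈ S, ρ q a

/-- Determinized transition extended to strings: `δ^B*(S,x)`. -/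
def dRun {Q σ : Type*} (ρ : Q → σ → Set Q) (S : Set Q) (x : List σ) : Set Q :=
  x.foldl (dTrans ρ) S

/-- NFA transition relation extended to strings, by recursion on the string: `ρ*(q,x)`. -/
def nRun {Q σ : Type*} (ρ : Q → σ → Set Q) : Q → List σ → Set Q
  | q, [] => {q}
  | q, a :: x => ⋃ q' ∈ ρ q a, nRun ρ q' x

/-- The language accepted by the RI-DFA of the NFA given by `ρ`, `F`, starting
    from a state `S` (final states are the subsets meeting `F`). -/
def langB {Q σ : Type*} (ρ : Q → σ → Set Q) (F : Set Q) (S : Set Q) : Set (List σ) :=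
  {x | (dRun ρ S x ∩ F).Nonempty}

/-- The language of an NFA. -/
def nfaLang {Q σ : Type*} (ρ : Q → σ → Set Q) (q0 : Q) (F : Set Q) : Set (List σ) :=
  {x | (nRun ρ q0 x ∩ F).Nonempty}

lemma dRun_eq {Q σ : Type*} (ρ : Q → σ → Set Q) (S : Set Q) (x : List σ) :
    dRun ρ S x = ⋃ q ∈ S, nRun ρ q x := by
  induction x generalizing S with
  | nil => simp [dRun, nRun]
  | cons a x ih =>
    show dRun ρ (dTrans ρ S a) x = _
    rw [ih]
    ext r
    simp only [dTrans, nRun, Set.mem_iUnion, exists_prop]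
    tauto

lemma langB_singleton {Q σ : Type*} (ρ : Q → σ → Set Q) (F : Set Q) (q : Q) :
    langB ρ F {q} = nfaLang ρ q F := by
  ext x
  simp [langB, nfaLang, dRun_eq]

lemma nfa_step {Q σ : Type*} (ρ : Q → σ → Set Q) (F : Set Q) (q : Q) (a : σ) (x : List σ) :
    (a :: x) ∈ nfaLang ρ q F ↔ ∃ p ∈ ρ q a, x ∈ nfaLang ρ p F := by
  simp only [nfaLang, nRun, Set.mem_setOf_eq, Set.Nonempty, Set.mem_inter_iff,
    Set.mem_iUnion, exists_prop]
  tauto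

/-- Minimality theorem: let `N` (over states `QN`) be an NFA and `N_min`
    (over states `Qm`) a state-minimal NFA equivalent to `N`. Let `B` and `C` be the
    RI-DFAs of `N` and `N_min` (so `C` has `|Qm|` initial states), and let `B_min` be
    obtained from `B` by the initial-state reduction via language-equivalence classes,
    encoded by a delegate choice `sel` (so `B_min` has initial states `{ {sel q} : q ∈ QN }`).
    Then the number of initial states of `C` is at most that of `B_min`. -/
theorem minimality {σ QN Qm : Type} [Fintype QN] [Fintype Qm]
    (ρ : QN → σ → Set QN) (q0 : QN) (F : Set QN)
    (ρm : Qm → σ → Set Qm) (q0m : Qm) (Fm : Set Qm)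
    (hequiv : nfaLang ρm q0m Fm = nfaLang ρ q0 F)
    (hmin : ∀ (Q' : Type) (inst : Fintype Q') (ρ' : Q' → σ → Set Q') (q0' : Q')
      (F' : Set Q'), nfaLang ρ' q0' F' = nfaLang ρ q0 F →
        Fintype.card Qm ≤ @Fintype.card Q' inst)
    (sel : QN → QN)
    (hsel_equiv : ∀ q : QN, langB ρ F {sel q} = langB ρ F {q})
    (hsel_class : ∀ q q' : QN, langB ρ F ({q} : Set QN) = langB ρ F {q'} → sel q = sel q')
    (hsel_idem : ∀ q : QN, sel (sel q) = sel q) :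
    Fintype.card Qm ≤ Nat.card (Set.range fun q : QN => ({sel q} : Set QN)) := by
  classical
  set Q' := ↥(Set.range sel) with hQ'
  have instQ' : Fintype Q' := Fintype.ofFinite _
  set ρ' : Q' → σ → Set Q' := fun s a => {t | (t : QN) ∈ sel '' ρ (s : QN) a} with hρ'
  set F' : Set Q' := {t | (t : QN) ∈ F} with hF'
  have key : ∀ (x : List σ) (s : Q'), x ∈ nfaLang ρ' s F' ↔ x ∈ langB ρ F {(s : QN)} := by
    intro x
    induction x with
    | nil =>
      intro s
      rw [langB_singleton]
      show (({s} : Set Q') ∩ F').Nonempty ↔ (({(s : QN)} : Set QN) ∩ F).Nonempty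
      rw [Set.singleton_inter_nonempty, Set.singleton_inter_nonempty]
      exact Iff.rfl
    | cons a x ih =>
      intro s
      rw [langB_singleton, nfa_step, nfa_step]
      constructor
      · rintro ⟨t, ht, hx⟩
        obtain ⟨p, hp, hpt⟩ := ht
        refine ⟨p, hp, ?_⟩
        rw [← langB_singleton]
        have := (ih t).mp hx
        rw [← hpt, hsel_equiv p] at this
        exact this
      · rintro ⟨p, hp, hx⟩
        refine ⟨⟨sel p, Set.mem_range_self p⟩, ⟨p, hp, rfl⟩, ?_⟩
        rw [ih]
        show x ∈ langB ρ F {sel p}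
        rw [hsel_equiv p, langB_singleton]
        exact hx
  set s0 : Q' := ⟨sel q0, Set.mem_range_self q0⟩ with hs0
  have hlang : nfaLang ρ' s0 F' = nfaLang ρ q0 F := by
    ext x
    constructor
    · intro h
      have := (key x s0).mp h
      rwa [show ((s0 : QN)) = sel q0 from rfl, hsel_equiv q0, langB_singleton] at this
    · intro h
      refine (key x s0).mpr ?_
      rwa [show ((s0 : QN)) = sel q0 from rfl, hsel_equiv q0, langB_singleton]
  have hcard := hmin Q' instQ' ρ' s0 F' hlang
  have heq : Nat.card (Set.range fun q : QN => ({sel q} : Set QN)) = Fintype.card Q' := by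
    have h1 : (Set.range fun q : QN => ({sel q} : Set QN))
        = (fun x : QN => ({x} : Set QN)) '' Set.range sel := by
      rw [← Set.range_comp]; rfl
    rw [h1, Nat.card_coe_set_eq, Set.ncard_image_of_injective _ (fun a b h => by
      simpa using h), ← Nat.card_coe_set_eq, Nat.card_eq_fintype_card]
  omega
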